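/- arXiv:2601.04616 — 2 statements merged into one kernel-verified Lean document; each statement's English description precedes it below -/
import Mathlib

section
/- Let ι be a finite index type with decidable equality and E a real vector space. Let u : (ι → E) → (ι → ℝ) be permutation equivariant. For x : ι → E, j : ι, and a finite set T ⊆ ι with j ∉ T, define v(x, T, j) = Σ_{R ⊆ T} (-1)^(|T| - |R|) · u(mask(x, R ∪ {j}))(j). Then v is permutation equivariant: for every permutation π of ι, every x, every finite T with j ∉ T, one has v(x ∘ π, T, j) = v(x, π(T), π(j)), where π(T) is the image of T under π. -/
/-- The masked feature map: `mask x A i = x i` if `i ∈ A`, and `0` otherwise. -/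
def mask {ι E : Type*} [DecidableEq ι] [Zero E] (x : ι → E) (A : Finset ι) : ι → E :=
  fun i => if i ∈ A then x i else 0

/-- Permutation equivariance of a utility function `u : (ι → E) → (ι → ℝ)`. -/
def PermEquivariant {ι E : Type*} (u : (ι → E) → ι → ℝ) : Prop :=
  ∀ (π : Equiv.Perm ι) (x : ι → E) (j : ι), u (x ∘ π) j = u x (π j)

/-- The context-effect coefficient
`v(x, T, j) = ∑_{R ⊆ T} (-1)^(|T|-|R|) · u(mask(x, R ∪ {j}))(j)`. -/
noncomputable def vCoef {ι E : Type*} [DecidableEq ι] [Zero E]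
    (u : (ι → E) → ι → ℝ) (x : ι → E) (T : Finset ι) (j : ι) : ℝ :=
  ∑ R ∈ T.powerset, (-1 : ℝ) ^ (T.card - R.card) * u (mask x (insert j R)) j

theorem mask_comp_equiv {ι κ E : Type*} [DecidableEq ι] [DecidableEq κ] [Zero E]
    (e : ι ≃ κ) (x : κ → E) (A : Finset ι) :
    mask (x ∘ e) A = mask x (A.image e) ∘ e := by
  funext i
  simp [mask]

theorem PermEquivariant.apply_mask {ι E : Type*} [DecidableEq ι] [Zero E]
    {u : (ι → E) → ι → ℝ} (hu : PermEquivariant u)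
    (π : Equiv.Perm ι) (x : ι → E) (A : Finset ι) (j : ι) :
    u (mask (x ∘ π) A) j = u (mask x (A.image π)) (π j) := by
  rw [mask_comp_equiv, hu]

theorem vCoef_permEquivariant_general {ι : Type*} [DecidableEq ι]
    {E : Type*} [AddCommGroup E]
    (u : (ι → E) → ι → ℝ) (hu : PermEquivariant u)
    (π : Equiv.Perm ι) (x : ι → E) (T : Finset ι) (j : ι) :
    vCoef u (x ∘ π) T j = vCoef u x (T.image π) (π j) := by
  have hinj : Function.Injective (Finset.image π) := Finset.image_injective π.injective
  rw [vCoef, vCoef, Finset.powerset_image, Finset.sum_image hinj.injOn]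
  refine Finset.sum_congr rfl fun R _ => ?_
  rw [Finset.card_image_of_injective _ π.injective, Finset.card_image_of_injective _ π.injective,
    hu.apply_mask, Finset.image_insert]

/-- if `u` is permutation equivariant, so is `v`:
`v(x ∘ π, T, j) = v(x, π(T), π(j))` whenever `j ∉ T`. -/
theorem vCoef_permEquivariant {ι : Type*} [Fintype ι] [DecidableEq ι]
    {E : Type*} [AddCommGroup E] [Module ℝ E]
    (u : (ι → E) → ι → ℝ) (hu : PermEquivariant u)
    (π : Equiv.Perm ι) (x : ι → E) (T : Finset ι) (j : ι) (hj : j ∉ T) :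
    vCoef u (x ∘ π) T j = vCoef u x (T.image π) (π j) :=
  vCoef_permEquivariant_general u hu π x T j
end

section
/- Proposition 1: Let ι be a finite index type with decidable equality and E a real vector space. For every permutation-equivariant utility function u : (ι → E) → (ι → ℝ) there exists a function v assigning to each x : ι → E, each finite T ⊆ ι, and each j ∉ T a real number v(x, T, j), such that: (i) v(x, T, j) depends on x only through the masked features mask(x, T ∪ {j}), i.e. v(x, T, j) = v(mask(x, T ∪ {j}), T, j); (ii) v is permutation equivariant, i.e. v(x ∘ π, T, j) = v(x, π(T), π(j)) for every permutation π of ι; and (iii) for every finite S ⊆ ι with j ∈ S, u(mask(x, S))(j) = Σ_{T ⊆ S \ {j}} v(x, T, j). -/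
open Finset

namespace Finset

variable {α R : Type*} [DecidableEq α] [Ring R]

theorem sum_Icc_neg_one_pow_card_sub {s t : Finset α} (h : s ⊆ t) :
    ∑ u ∈ Icc s t, (-1 : R) ^ (#u - #s) = if s = t then 1 else 0 := by
  have hinj : Set.InjOn (s ∪ ·) (t \ s).powerset := fun v hv w hw hvw => by
    have hv : Disjoint s v := disjoint_sdiff.mono_right (mem_powerset.1 hv)
    have hw : Disjoint s w := disjoint_sdiff.mono_right (mem_powerset.1 hw)
    simpa [union_sdiff_cancel_left hv, union_sdiff_cancel_left hw] using
      congrArg (· \ s) hvw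
  rw [Icc_eq_image_powerset h, sum_image hinj]
  calc ∑ v ∈ (t \ s).powerset, (-1 : R) ^ (#(s ∪ v) - #s)
      = ∑ v ∈ (t \ s).powerset, (-1 : R) ^ #v := by
        refine sum_congr rfl fun v hv => ?_
        rw [card_union_of_disjoint (disjoint_sdiff.mono_right (mem_powerset.1 hv)),
          Nat.add_sub_cancel_left]
    _ = if s = t then 1 else 0 := by
        have hcast : ∑ v ∈ (t \ s).powerset, (-1 : R) ^ #v
            = ((∑ v ∈ (t \ s).powerset, (-1 : ℤ) ^ #v : ℤ) : R) := by push_cast; rfl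
        have hempty : t \ s = ∅ ↔ s = t := by
          rw [sdiff_eq_empty_iff_subset]
          exact ⟨subset_antisymm h, fun hst => hst ▸ subset_rfl⟩
        rw [hcast, sum_powerset_neg_one_pow_card]
        simp only [hempty]
        split_ifs <;> simp

theorem sum_powerset_sum_powerset_neg_one_pow (s : Finset α) (f : Finset α → R) :
    ∑ t ∈ s.powerset, ∑ u ∈ t.powerset, (-1 : R) ^ (#t - #u) * f u = f s := by
  calc ∑ t ∈ s.powerset, ∑ u ∈ t.powerset, (-1 : R) ^ (#t - #u) * f u
      = ∑ u ∈ s.powerset, ∑ t ∈ Icc u s, (-1 : R) ^ (#t - #u) * f u :=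
        sum_comm' fun t u => by
          simp only [mem_powerset, mem_Icc]
          exact ⟨fun ⟨hts, hut⟩ => ⟨⟨hut, hts⟩, hut.trans hts⟩, fun ⟨⟨hut, hts⟩, _⟩ => ⟨hts, hut⟩⟩
    _ = ∑ u ∈ s.powerset, (if u = s then f u else 0) := by
        refine sum_congr rfl fun u hu => ?_
        rw [← sum_mul, sum_Icc_neg_one_pow_card_sub (mem_powerset.1 hu), ite_mul, one_mul, zero_mul]
    _ = f s := by simp

end Finset

section Mask

variable {ι E : Type*} [DecidableEq ι] [Zero E]

theorem mask_mask_of_subset (x : ι → E) {A B : Finset ι} (h : B ⊆ A) :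
    mask (mask x A) B = mask x B := by
  funext i
  by_cases hi : i ∈ B
  · simp [mask, hi, h hi]
  · simp [mask, hi]

theorem mask_comp_perm (x : ι → E) (π : Equiv.Perm ι) (A : Finset ι) :
    mask (x ∘ π) A = mask x (A.image π) ∘ π := by
  funext i
  simp [mask, π.injective.mem_finset_image]

end Mask

section ContextEffect

variable {ι E : Type*} [DecidableEq ι] [Zero E]

def contextEffect (u : (ι → E) → ι → ℝ) (x : ι → E) (T : Finset ι) (j : ι) : ℝ :=
  ∑ R ∈ T.powerset, (-1) ^ (#T - #R) * u (mask x (insert j R)) j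

variable (u : (ι → E) → ι → ℝ)

theorem contextEffect_mask (x : ι → E) (T : Finset ι) (j : ι) :
    contextEffect u (mask x (insert j T)) T j = contextEffect u x T j :=
  sum_congr rfl fun R hR => by
    rw [mask_mask_of_subset x (insert_subset_insert j (mem_powerset.1 hR))]

theorem contextEffect_comp_perm (hu : PermEquivariant u) (π : Equiv.Perm ι) (x : ι → E)
    (T : Finset ι) (j : ι) :
    contextEffect u (x ∘ π) T j = contextEffect u x (T.image π) (π j) := by
  rw [contextEffect, contextEffect, powerset_image,
    sum_image fun R _ R' _ h => image_injective π.injective h]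
  refine sum_congr rfl fun R _ => ?_
  rw [mask_comp_perm, hu, image_insert, card_image_of_injective _ π.injective,
    card_image_of_injective _ π.injective]

theorem sum_contextEffect {x : ι → E} {S : Finset ι} {j : ι} (hj : j ∈ S) :
    ∑ T ∈ (S.erase j).powerset, contextEffect u x T j = u (mask x S) j := by
  conv_rhs => rw [← insert_erase hj]
  exact sum_powerset_sum_powerset_neg_one_pow (S.erase j) fun R => u (mask x (insert j R)) j

end ContextEffect

theorem exists_context_effect_decomposition_general {ι : Type*} [DecidableEq ι]
    {E : Type*} [AddCommGroup E]
    (u : (ι → E) → ι → ℝ) (hu : PermEquivariant u) :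
    ∃ v : (ι → E) → Finset ι → ι → ℝ,
      (∀ (x : ι → E) (T : Finset ι) (j : ι), j ∉ T →
        v x T j = v (mask x (insert j T)) T j) ∧
      (∀ (π : Equiv.Perm ι) (x : ι → E) (T : Finset ι) (j : ι), j ∉ T →
        v (x ∘ π) T j = v x (T.image π) (π j)) ∧
      (∀ (x : ι → E) (S : Finset ι) (j : ι), j ∈ S →
        u (mask x S) j = ∑ T ∈ (S.erase j).powerset, v x T j) :=
  ⟨contextEffect u,
    fun x T j _ => (contextEffect_mask u x T j).symm,
    fun π x T j _ => contextEffect_comp_perm u hu π x T j,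
    fun _ _ _ hj => (sum_contextEffect u hj).symm⟩

/-- Proposition 1: every permutation-equivariant utility function
`u : (ι → E) → (ι → ℝ)` admits context-effect coefficients `v` such that
(i) `v x T j` depends on `x` only through `mask x (T ∪ {j})`,
(ii) `v` is permutation equivariant, and
(iii) `u (mask x S) j = ∑_{T ⊆ S \ {j}} v x T j` whenever `j ∈ S`. -/
theorem exists_context_effect_decomposition {ι : Type*} [Fintype ι] [DecidableEq ι]
    {E : Type*} [AddCommGroup E] [Module ℝ E]
    (u : (ι → E) → ι → ℝ) (hu : PermEquivariant u) :
    ∃ v : (ι → E) → Finset ι → ι → ℝ,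
      (∀ (x : ι → E) (T : Finset ι) (j : ι), j ∉ T →
        v x T j = v (mask x (insert j T)) T j) ∧
      (∀ (π : Equiv.Perm ι) (x : ι → E) (T : Finset ι) (j : ι), j ∉ T →
        v (x ∘ π) T j = v x (T.image π) (π j)) ∧
      (∀ (x : ι → E) (S : Finset ι) (j : ι), j ∈ S →
        u (mask x S) j = ∑ T ∈ (S.erase j).powerset, v x T j) :=
  exists_context_effect_decomposition_general u hu
end
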